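/- Let n ∈ ℕ and L ⊆ ℕ infinite. Then for every m < n and every G ∈ S_m, the sum ∑_{k ∈ G} a_n^L(k) < 3 / (min L). -/

import Mathlib

/-!
Induction on `m`. For `m = 0` one uses that every coordinate of `a_{n+1}^L` is at most
`1 / min L`. For the step, `a_{n+2}^L` is the average of `l = min L` blocks `a_{n+1}^{L_i}` with
successive supports in `[μ_i, μ_{i+1})`, `μ_i = min L_i`, and `μ_{i+1} ≥ 2 μ_i` because a block
of level `n + 1 ≥ 1` has at least `μ_i` points. The set `G ∈ S_{m+1}` splits into `d ≤ min G`
successive pieces in `S_m`; by induction block `i` gives `G` mass `< 3 x_i / μ_i`, where `x_i`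
is the number of pieces it meets. Two blocks share at most one piece, so `∑ (x_i - 1) ≤ d - 1`,
and `d < μ_{i₀+1}` for the first block `i₀` meeting `G`. Capping the mass of each block by `1`
and summing the geometric decay of `1 / μ_i` after `i₀` shows that the blocks give `G` total
mass `< 3`, i.e. `a_{n+2}^L` gives it mass `< 3 / l`.
-/

/-- The first Schreier family: finite sets `F` with `|F| ≤ min F`. -/
def SchreierOne : Set (Finset ℕ) := {F | ∀ k ∈ F, F.card ≤ k}

/-- The minimum of a finite set of naturals (0 for the empty set). -/
noncomputable def finMin (F : Finset ℕ) : ℕ := sInf {k | k ∈ F}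

/-- The convolution `P[Q]` of two families of finite subsets of ℕ:
unions of successive members of `Q` whose minima form a set in `P`. -/
def conv (P Q : Set (Finset ℕ)) : Set (Finset ℕ) :=
  {U | ∃ (d : ℕ) (F : Fin d → Finset ℕ),
    (∀ i, F i ∈ Q) ∧ (∀ i, (F i).Nonempty) ∧
    (∀ i j : Fin d, i < j → ∀ a ∈ F i, ∀ b ∈ F j, a < b) ∧
    (Finset.univ.image fun i => finMin (F i)) ∈ P ∧
    U = Finset.univ.biUnion F}

/-- The modified convolution `P[Q]_M`: unions of pairwise disjoint members of `Q`
whose minima form a set in `P`. -/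
def mconv (P Q : Set (Finset ℕ)) : Set (Finset ℕ) :=
  {U | ∃ (d : ℕ) (F : Fin d → Finset ℕ),
    (∀ i, F i ∈ Q) ∧ (∀ i, (F i).Nonempty) ∧
    (∀ i j : Fin d, i ≠ j → Disjoint (F i) (F j)) ∧
    (Finset.univ.image fun i => finMin (F i)) ∈ P ∧
    U = Finset.univ.biUnion F}

/-- The Schreier families `S_n` (indexed so that `Schreier 1 = S_1`,
`Schreier (n+1) = S_1[S_n]`). -/
def Schreier : ℕ → Set (Finset ℕ)
  | 0 => {F | F.card ≤ 1}
  | 1 => SchreierOne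
  | (n+2) => conv SchreierOne (Schreier (n+1))

/-- The modified Schreier families `S^M_n`. -/
def SchreierM : ℕ → Set (Finset ℕ)
  | 0 => {F | F.card ≤ 1}
  | 1 => SchreierOne
  | (n+2) => mconv SchreierOne (SchreierM (n+1))

/-- The repeated averages `a_n^L ∈ c_00` for an (infinite) set `L ⊆ ℕ`:
`a_0^L = e_{min L}`, and `a_{n+1}^L = (1/l_1)(a_n^{L_1} + ... + a_n^{L_{l_1}})`
where `l_1 = min L`, `L_1 = L` and `L_{k+1} = L_k \ supp a_n^{L_k}`. -/
noncomputable def ra : ℕ → Set ℕ → (ℕ →₀ ℝ) := fun n =>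
  Nat.rec (motive := fun _ => Set ℕ → (ℕ →₀ ℝ))
    (fun L => Finsupp.single (sInf L) 1)
    (fun _ prev L =>
      (((sInf L : ℕ) : ℝ))⁻¹ •
        ∑ k ∈ Finset.range (sInf L),
          prev (Nat.rec (motive := fun _ => Set ℕ) L
            (fun _ M => M \ ↑(prev M).support) k))
    n

open Finset Function

/-- `raSet n L i` is the set `L_{i+1}` in the recursion defining `ra (n + 1) L`. -/
def raSet (n : ℕ) (L : Set ℕ) : ℕ → Set ℕ :=
  Nat.rec L (fun _ M => M \ ↑(ra n M).support)

def IsAdmissible (L : Set ℕ) : Prop := L.Infinite ∧ 0 ∉ L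

lemma ra_zero (L : Set ℕ) : ra 0 L = Finsupp.single (sInf L) 1 := rfl

lemma ra_succ (n : ℕ) (L : Set ℕ) :
    ra (n + 1) L = ((sInf L : ℕ) : ℝ)⁻¹ • ∑ i ∈ range (sInf L), ra n (raSet n L i) := rfl

lemma ra_succ_apply (n : ℕ) (L : Set ℕ) (k : ℕ) :
    ra (n + 1) L k = ((sInf L : ℕ) : ℝ)⁻¹ * ∑ i ∈ range (sInf L), ra n (raSet n L i) k := by
  rw [ra_succ, Finsupp.smul_apply, Finsupp.finsetSum_apply, smul_eq_mul]

lemma raSet_succ (n : ℕ) (L : Set ℕ) (i : ℕ) :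
    raSet n L (i + 1) = raSet n L i \ ↑(ra n (raSet n L i)).support := rfl

lemma raSet_antitone (n : ℕ) (L : Set ℕ) : Antitone (raSet n L) :=
  antitone_nat_of_succ_le fun i => by rw [raSet_succ]; exact Set.sdiff_subset

lemma raSet_subset (n : ℕ) (L : Set ℕ) (i : ℕ) : raSet n L i ⊆ L :=
  raSet_antitone n L (Nat.zero_le i)

lemma Set.Infinite.raSet {L : Set ℕ} (hL : L.Infinite) (n i : ℕ) : (raSet n L i).Infinite := by
  induction i with
  | zero => exact hL
  | succ i ih => rw [raSet_succ]; exact ih.sdiff (Finset.finite_toSet _)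

lemma IsAdmissible.raSet {L : Set ℕ} (hL : IsAdmissible L) (n i : ℕ) :
    IsAdmissible (raSet n L i) :=
  ⟨hL.1.raSet n i, fun h => hL.2 (raSet_subset n L i h)⟩

lemma IsAdmissible.sInf_pos {L : Set ℕ} (hL : IsAdmissible L) : 0 < sInf L :=
  Nat.pos_of_ne_zero fun h => hL.2 (h ▸ Nat.sInf_mem hL.1.nonempty)

lemma sInf_le_sInf_raSet {L : Set ℕ} (hL : L.Infinite) (n i : ℕ) : sInf L ≤ sInf (raSet n L i) :=
  Nat.sInf_le (raSet_subset n L i (Nat.sInf_mem (hL.raSet n i).nonempty))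

lemma ra_nonneg (n : ℕ) (L : Set ℕ) (k : ℕ) : 0 ≤ ra n L k := by
  induction n generalizing L with
  | zero => rw [ra_zero, Finsupp.single_apply]; split_ifs <;> norm_num
  | succ n ih => rw [ra_succ_apply]; exact mul_nonneg (by positivity) (sum_nonneg fun _ _ => ih _)

lemma support_ra_succ (n : ℕ) (L : Set ℕ) :
    (ra (n + 1) L).support = (range (sInf L)).biUnion fun i => (ra n (raSet n L i)).support := by
  ext k
  simp only [Finsupp.mem_support_iff, ra_succ_apply, mem_biUnion, mem_range, ne_eq,
    mul_eq_zero, inv_eq_zero, Nat.cast_eq_zero,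
    sum_eq_zero_iff_of_nonneg fun _ _ => ra_nonneg _ _ _]
  push Not
  constructor
  · rintro ⟨-, i, hi, hk⟩
    exact ⟨i, hi, hk⟩
  · rintro ⟨i, hi, hk⟩
    exact ⟨by omega, i, hi, hk⟩

lemma support_ra_subset {L : Set ℕ} (hL : L.Infinite) (n : ℕ) : ↑(ra n L).support ⊆ L := by
  induction n generalizing L with
  | zero =>
    rw [ra_zero, Finsupp.support_single _ one_ne_zero, coe_singleton,
      Set.singleton_subset_iff]
    exact Nat.sInf_mem hL.nonempty
  | succ n ih =>
    intro k hk
    obtain ⟨i, -, hk⟩ := mem_biUnion.1 (support_ra_succ n L ▸ hk)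
    exact raSet_subset n L i (ih (hL.raSet n i) hk)

lemma lt_of_mem_support_ra {n : ℕ} {L : Set ℕ} {x y : ℕ} (hx : x ∈ L)
    (hx' : x ∉ (ra n L).support) (hy : y ∈ (ra n L).support) : y < x := by
  induction n generalizing L with
  | zero =>
    rw [ra_zero, Finsupp.support_single _ one_ne_zero, mem_singleton] at hx' hy
    exact hy ▸ lt_of_le_of_ne (Nat.sInf_le hx) (Ne.symm hx')
  | succ n ih =>
    rw [support_ra_succ, mem_biUnion] at hx' hy
    push Not at hx'
    obtain ⟨i, hi, hy⟩ := hy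
    have hmem : ∀ j ≤ i, x ∈ raSet n L j := by
      intro j hj
      induction j with
      | zero => exact hx
      | succ j ihj =>
        rw [raSet_succ]
        exact ⟨ihj (by omega), hx' j (mem_range.2 (lt_of_lt_of_le (by omega) (mem_range.1 hi)))⟩
    exact ih (hmem i le_rfl) (hx' i hi) hy

lemma lt_sInf_raSet_succ {n : ℕ} {L : Set ℕ} (hL : L.Infinite) {i a : ℕ}
    (ha : a ∈ (ra n (raSet n L i)).support) : a < sInf (raSet n L (i + 1)) := by
  have h := Nat.sInf_mem (hL.raSet n (i + 1)).nonempty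
  exact lt_of_mem_support_ra h.1 h.2 ha

lemma lt_of_mem_support_ra_raSet {n : ℕ} {L : Set ℕ} (hL : L.Infinite) {i i' a b : ℕ}
    (hii' : i < i') (ha : a ∈ (ra n (raSet n L i)).support)
    (hb : b ∈ (ra n (raSet n L i')).support) : a < b :=
  (lt_sInf_raSet_succ hL ha).trans_le <| Nat.sInf_le <|
    raSet_antitone n L hii' (support_ra_subset (hL.raSet n i') n hb)

lemma sum_ra_eq_one {n : ℕ} {L : Set ℕ} (hL : IsAdmissible L) {S : Finset ℕ}
    (hS : (ra n L).support ⊆ S) : ∑ k ∈ S, ra n L k = 1 := by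
  induction n generalizing L with
  | zero =>
    rw [ra_zero, Finsupp.support_single _ one_ne_zero, singleton_subset_iff] at hS
    simp [ra_zero, Finsupp.single_apply, hS]
  | succ n ih =>
    have hblock : ∀ i ∈ range (sInf L), ∑ k ∈ S, ra n (raSet n L i) k = 1 := fun i hi =>
      ih (hL.raSet n i) ((subset_biUnion_of_mem _ hi).trans (support_ra_succ n L ▸ hS))
    have hl : ((sInf L : ℕ) : ℝ) ≠ 0 := Nat.cast_ne_zero.2 hL.sInf_pos.ne'
    simp_rw [ra_succ_apply, ← mul_sum]
    rw [sum_comm, sum_congr rfl hblock, sum_const, card_range, nsmul_one, inv_mul_cancel₀ hl]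

lemma sum_ra_le_one {n : ℕ} {L : Set ℕ} (hL : IsAdmissible L) (G : Finset ℕ) :
    ∑ k ∈ G, ra n L k ≤ 1 :=
  calc ∑ k ∈ G, ra n L k ≤ ∑ k ∈ G ∪ (ra n L).support, ra n L k :=
        sum_le_sum_of_subset_of_nonneg subset_union_left fun _ _ _ => ra_nonneg _ _ _
    _ = 1 := sum_ra_eq_one hL subset_union_right

lemma support_ra_nonempty {n : ℕ} {L : Set ℕ} (hL : IsAdmissible L) :
    (ra n L).support.Nonempty := by
  rw [nonempty_iff_ne_empty]
  intro h
  simpa using sum_ra_eq_one (n := n) hL h.le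

lemma pairwise_disjoint_of_forall_lt {ι α : Type*} [LinearOrder ι] [Preorder α]
    {F : ι → Finset α} (hF : ∀ i j, i < j → ∀ a ∈ F i, ∀ b ∈ F j, a < b) :
    Pairwise (Disjoint on F) := fun i j hne => disjoint_left.2 fun a hi hj =>
  hne.lt_or_gt.elim (fun h => (hF i j h a hi a hj).false) fun h => (hF j i h a hj a hi).false

lemma pairwise_disjoint_support_ra_raSet {n : ℕ} {L : Set ℕ} (hL : L.Infinite) :
    Pairwise (Disjoint on fun i => (ra n (raSet n L i)).support) :=
  pairwise_disjoint_of_forall_lt fun _ _ h _ ha _ hb => lt_of_mem_support_ra_raSet hL h ha hb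

lemma ra_succ_apply_le {n : ℕ} {L : Set ℕ} (hL : IsAdmissible L) (k : ℕ) :
    ra (n + 1) L k ≤ ((sInf L : ℕ) : ℝ)⁻¹ := by
  rw [ra_succ_apply]
  refine mul_le_of_le_one_right (by positivity) ?_
  set I := {i ∈ range (sInf L) | k ∈ (ra n (raSet n L i)).support}
  have hI : #I ≤ 1 := card_le_one.2 fun i hi i' hi' =>
    (pairwise_disjoint_support_ra_raSet hL.1).eq <|
      not_disjoint_iff.2 ⟨k, (mem_filter.1 hi).2, (mem_filter.1 hi').2⟩
  rw [← sum_filter_of_ne fun i _ h => Finsupp.mem_support_iff.2 h]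
  calc ∑ i ∈ I, ra n (raSet n L i) k ≤ #I • (1 : ℝ) :=
        sum_le_card_nsmul _ _ _ fun i _ => by simpa using sum_ra_le_one (hL.raSet n i) {k}
    _ ≤ 1 := by rw [nsmul_one]; exact_mod_cast hI

lemma sInf_le_card_support_ra_succ {n : ℕ} {L : Set ℕ} (hL : IsAdmissible L) :
    sInf L ≤ #(ra (n + 1) L).support := by
  rw [support_ra_succ]
  exact (card_range _).symm.le.trans <| card_le_card_biUnion
    ((pairwise_disjoint_support_ra_raSet hL.1).set_pairwise _) fun i _ =>
      support_ra_nonempty (hL.raSet n i)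

lemma support_ra_raSet_subset_Ico {n : ℕ} {L : Set ℕ} (hL : L.Infinite) (i : ℕ) :
    (ra n (raSet n L i)).support ⊆ Ico (sInf (raSet n L i)) (sInf (raSet n L (i + 1))) :=
  fun _ ha => mem_Ico.2
    ⟨Nat.sInf_le (support_ra_subset (hL.raSet n i) n ha), lt_sInf_raSet_succ hL ha⟩

lemma two_mul_sInf_raSet_le {n : ℕ} {L : Set ℕ} (hL : IsAdmissible L) (i : ℕ) :
    2 * sInf (raSet (n + 1) L i) ≤ sInf (raSet (n + 1) L (i + 1)) := by
  have := (sInf_le_card_support_ra_succ (hL.raSet (n + 1) i)).trans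
    (card_le_card (support_ra_raSet_subset_Ico hL.1 i))
  rw [Nat.card_Ico] at this
  omega

lemma sum_ra_succ (n : ℕ) (L : Set ℕ) (G : Finset ℕ) :
    ∑ k ∈ G, ra (n + 1) L k =
      ((sInf L : ℕ) : ℝ)⁻¹ * ∑ i ∈ range (sInf L), ∑ k ∈ G, ra n (raSet n L i) k := by
  simp_rw [ra_succ_apply, ← mul_sum]
  rw [sum_comm]

lemma pow_mul_le_of_two_mul_le {μ : ℕ → ℕ} (hμ : ∀ i, 2 * μ i ≤ μ (i + 1)) (i k : ℕ) :
    2 ^ k * μ i ≤ μ (i + k) := by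
  induction k with
  | zero => simp
  | succ k ih =>
    rw [pow_succ, mul_comm _ 2, mul_assoc]
    exact (Nat.mul_le_mul_left 2 ih).trans (hμ _)

lemma finMin_mem {F : Finset ℕ} (h : F.Nonempty) : finMin F ∈ F := Nat.sInf_mem h

lemma finMin_le {F : Finset ℕ} {a : ℕ} (h : a ∈ F) : finMin F ≤ a := Nat.sInf_le h

lemma exists_pieces_of_mem_schreier_succ {m : ℕ} {G : Finset ℕ} (hG : G ∈ Schreier (m + 1)) :
    ∃ (d : ℕ) (F : Fin d → Finset ℕ), (∀ j, F j ∈ Schreier m) ∧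
      (∀ j j', j < j' → ∀ a ∈ F j, ∀ b ∈ F j', a < b) ∧ (∀ g ∈ G, d ≤ g) ∧
      G = univ.biUnion F := by
  cases m with
  | zero =>
    refine ⟨#G, fun j => {G.orderEmbOfFin rfl j}, fun j => by simp [Schreier], ?_, hG, ?_⟩
    · intro j j' h a ha b hb
      rw [mem_singleton] at ha hb
      exact ha ▸ hb ▸ (G.orderEmbOfFin rfl).strictMono h
    · ext a
      simp only [mem_biUnion, mem_univ, true_and, mem_singleton, eq_comm (a := a)]
      rw [← mem_coe, ← G.range_orderEmbOfFin rfl, Set.mem_range]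
  | succ m =>
    obtain ⟨d, F, hF, hne, hsucc, hmin, rfl⟩ := hG
    have hmono : StrictMono fun j => finMin (F j) := fun j j' h =>
      hsucc j j' h _ (finMin_mem (hne j)) _ (finMin_mem (hne j'))
    refine ⟨d, F, hF, hsucc, fun g hg => ?_, rfl⟩
    obtain ⟨j, -, hj⟩ := mem_biUnion.1 hg
    have hcard := hmin _ (mem_image_of_mem (fun j => finMin (F j)) (mem_univ j))
    rw [card_image_of_injective _ hmono.injective, card_univ, Fintype.card_fin] at hcard
    exact hcard.trans (finMin_le hj)

def piecesMeeting {ι α : Type*} [Fintype ι] [DecidableEq α] (F : ι → Finset α) (s : Finset α) :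
    Finset ι :=
  {j | ¬Disjoint (F j) s}

lemma sum_biUnion_eq_sum_piecesMeeting {ι α M : Type*} [Fintype ι] [DecidableEq α]
    [AddCommMonoid M] {F : ι → Finset α} (hF : Pairwise (Disjoint on F)) (f : α →₀ M) :
    ∑ k ∈ univ.biUnion F, f k = ∑ j ∈ piecesMeeting F f.support, ∑ k ∈ F j, f k := by
  rw [sum_biUnion (hF.set_pairwise _), piecesMeeting, sum_filter_of_ne]
  intro j _ h hdisj
  exact h (sum_eq_zero fun k hk => Finsupp.notMem_support_iff.1 (disjoint_left.1 hdisj hk))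

lemma sum_biUnion_le_card_mul {ι α : Type*} [Fintype ι] [DecidableEq α] {F : ι → Finset α}
    (hF : Pairwise (Disjoint on F)) (f : α →₀ ℝ) {b : ℝ} (hb : ∀ j, ∑ k ∈ F j, f k ≤ b) :
    ∑ k ∈ univ.biUnion F, f k ≤ #(piecesMeeting F f.support) * b := by
  rw [sum_biUnion_eq_sum_piecesMeeting hF, ← nsmul_eq_mul, ← sum_const]
  exact sum_le_sum fun j _ => hb j

lemma sum_biUnion_lt_card_mul {ι α : Type*} [Fintype ι] [DecidableEq α] {F : ι → Finset α}
    (hF : Pairwise (Disjoint on F)) (f : α →₀ ℝ) {b : ℝ} (hb : ∀ j, ∑ k ∈ F j, f k < b)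
    (hne : (piecesMeeting F f.support).Nonempty) :
    ∑ k ∈ univ.biUnion F, f k < #(piecesMeeting F f.support) * b := by
  rw [sum_biUnion_eq_sum_piecesMeeting hF, ← nsmul_eq_mul, ← sum_const]
  exact sum_lt_sum_of_nonempty hne fun j _ => hb j

/-- Each element of `J i` other than its least one lies in no other `J i'`, and none of them is
the least element of `ι`. -/
lemma sum_card_sub_one_le {ι : Type*} [LinearOrder ι] [Fintype ι] (J : ℕ → Finset ι)
    (hJ : ∀ i i', i < i' → ∀ j ∈ J i, ∀ j' ∈ J i', j ≤ j') (s : Finset ℕ) :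
    ∑ i ∈ s, (#(J i) - 1) ≤ Fintype.card ι - 1 := by
  set E : ℕ → Finset ι := fun i => {j ∈ J i | ∃ j' ∈ J i, j' < j}
  have hE : ∀ i, #(J i) - 1 ≤ #(E i) := by
    intro i
    have hmin : #{j ∈ J i | ¬∃ j' ∈ J i, j' < j} ≤ 1 := by
      refine card_le_one.2 fun a ha b hb => ?_
      simp only [mem_filter, not_exists, not_and, not_lt] at ha hb
      exact le_antisymm (ha.2 b hb.1) (hb.2 a ha.1)
    have := card_filter_add_card_filter_not (s := J i) (fun j => ∃ j' ∈ J i, j' < j)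
    simp only [E]
    omega
  have hdisj : (s : Set ℕ).PairwiseDisjoint E := by
    intro i _ i' _ hne
    refine disjoint_left.2 fun j hj hj' => ?_
    simp only [E, mem_filter] at hj hj'
    rcases lt_or_gt_of_ne hne with h | h
    · obtain ⟨j', hj'J, hlt⟩ := hj'.2
      exact (hJ i i' h j hj.1 j' hj'J).not_gt hlt
    · obtain ⟨j', hj'J, hlt⟩ := hj.2
      exact (hJ i' i h j hj'.1 j' hj'J).not_gt hlt
  calc ∑ i ∈ s, (#(J i) - 1) ≤ ∑ i ∈ s, #(E i) := sum_le_sum fun i _ => hE i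
    _ = #(s.biUnion E) := (card_biUnion hdisj).symm
    _ ≤ Fintype.card ι - 1 := by
      rcases isEmpty_or_nonempty ι with hι | hι
      · have := card_le_univ (s.biUnion E)
        rw [Fintype.card_eq_zero] at this ⊢
        omega
      have hbot : univ.min' univ_nonempty ∉ s.biUnion E := by
        simp only [E, mem_biUnion, mem_filter, not_exists, not_and, not_lt]
        exact fun i _ _ j' _ => min'_le _ _ (mem_univ j')
      have := card_lt_univ_of_notMem hbot
      omega

lemma sum_card_piecesMeeting_sub_one_le {d : ℕ} {F : Fin d → Finset ℕ}
    (hF : ∀ j j', j < j' → ∀ a ∈ F j, ∀ b ∈ F j', a < b) {B : ℕ → Finset ℕ}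
    (hB : ∀ i i', i < i' → ∀ a ∈ B i, ∀ b ∈ B i', a < b) (s : Finset ℕ) :
    ∑ i ∈ s, (#(piecesMeeting F (B i)) - 1) ≤ d - 1 := by
  refine (sum_card_sub_one_le _ (fun i i' hii' j hj j' hj' => ?_) s).trans_eq (by simp)
  obtain ⟨a, ha, ha'⟩ := not_disjoint_iff.1 (mem_filter.1 hj).2
  obtain ⟨b, hb, hb'⟩ := not_disjoint_iff.1 (mem_filter.1 hj').2
  exact not_lt.1 fun h => (hF j' j h b hb a ha).not_gt (hB i i' hii' a ha' b hb')

lemma sum_range_lt_of_le_mul_div {K : ℕ} {μ : ℕ → ℕ} (hμ₀ : 0 < μ 0)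
    (hμ : ∀ k, 2 * μ k ≤ μ (k + 1)) {t : ℕ → ℝ} {y : ℕ → ℕ}
    (ht₁ : ∀ k < K, t k ≤ 1) (ht : ∀ k < K, t k ≤ y k * (3 / μ k)) :
    ∑ k ∈ range K, t k <
      1 / 2 + 9 / (2 * μ 0) + 3 / (2 * μ 0) * ((∑ k ∈ range K, (y k - 1) : ℕ) : ℝ) := by
  set w : ℝ := 3 / (2 * μ 0) with hw
  have hP : (0 : ℝ) < μ 0 := by exact_mod_cast hμ₀
  have hw0 : 0 < w := by positivity
  obtain _ | K := K
  · simp only [range_zero, sum_empty, Nat.cast_zero, mul_zero, add_zero]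
    positivity
  have hy : ∀ k, (y k : ℝ) ≤ 1 + (y k - 1 : ℕ) := fun k => by norm_cast; omega
  -- the first block is capped by `min (1, 3 y₀ / μ₀) ≤ (1 + 3 y₀ / μ₀) / 2`
  have ht₀ : t 0 ≤ 1 / 2 + w + w * (y 0 - 1 : ℕ) := by
    have : (y 0 : ℝ) * (3 / μ 0) = 2 * w * y 0 := by rw [hw]; field_simp
    nlinarith [ht 0 (by omega), ht₁ 0 (by omega), hy 0]
  have htk : ∀ k ∈ range K, t (k + 1) ≤ w * (1 / 2) ^ k + w * (y (k + 1) - 1 : ℕ) := by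
    intro k hk
    have hk1 : ((1 : ℝ) / 2) ^ k ≤ 1 := pow_le_one₀ (by norm_num) (by norm_num)
    have hpow : (2 : ℝ) ^ (k + 1) * μ 0 ≤ μ (k + 1) := by
      exact_mod_cast (zero_add (k + 1)) ▸ pow_mul_le_of_two_mul_le hμ 0 (k + 1)
    calc t (k + 1) ≤ y (k + 1) * (3 / μ (k + 1)) := ht _ (by simp at hk; omega)
      _ ≤ y (k + 1) * (3 / (2 ^ (k + 1) * μ 0)) := by gcongr
      _ = w * (1 / 2) ^ k * y (k + 1) := by rw [hw, one_div, inv_pow]; field_simp; ring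
      _ ≤ w * (1 / 2) ^ k * (1 + (y (k + 1) - 1 : ℕ)) := by gcongr; exact hy _
      _ = w * (1 / 2) ^ k + w * (1 / 2) ^ k * (y (k + 1) - 1 : ℕ) := by ring
      _ ≤ w * (1 / 2) ^ k + w * (y (k + 1) - 1 : ℕ) := by
        gcongr; exact mul_le_of_le_one_right hw0.le hk1
  have hgeom : ∑ k ∈ range K, ((1 : ℝ) / 2) ^ k < 2 := by
    rw [geom_sum_eq (by norm_num)]
    have : (0 : ℝ) < (1 / 2) ^ K := by positivity
    linarith [show (((1 : ℝ) / 2) ^ K - 1) / (1 / 2 - 1) = 2 - 2 * (1 / 2) ^ K by ring]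
  have hrest := sum_le_sum htk
  rw [sum_add_distrib, ← mul_sum, ← mul_sum] at hrest
  rw [sum_range_succ', Nat.cast_sum, sum_range_succ', ← Nat.cast_sum]
  have := mul_lt_mul_of_pos_left hgeom hw0
  have h9 : 9 / (2 * (μ 0 : ℝ)) = 3 * w := by rw [hw]; ring
  rw [h9, mul_add]
  push_cast at hrest ⊢
  linarith

/-- The numerical core of the inductive step: `c k` is the mass that the `k`-th block, counted
from the first one meeting `G`, puts on `G`, `x k` the number of pieces of `G` it meets and
`μ k` the minimum of its support. -/
lemma sum_range_lt_three {K : ℕ} {μ : ℕ → ℕ} {c : ℕ → ℝ} {x : ℕ → ℕ}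
    (hμ₀ : 3 ≤ μ 0) (hK : K ≤ μ 0) (hμ : ∀ k, 2 * μ k ≤ μ (k + 1))
    (hc : ∀ k < K, c k ≤ 1) (hc₀ : c 0 < x 0 * (3 / μ 0))
    (hcx : ∀ k < K, c k ≤ x k * (3 / μ k)) (hx : ∑ k ∈ range K, (x k - 1) + 2 ≤ μ 1) :
    ∑ k ∈ range K, c k < 3 := by
  have hm₀ : (3 : ℝ) ≤ μ 0 := by exact_mod_cast hμ₀
  have hP : 2 * (μ 0 : ℝ) ≤ μ 1 := by exact_mod_cast hμ 0
  have hP0 : (0 : ℝ) < μ 1 := by linarith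
  obtain _ | K := K
  · simp
  rw [sum_range_succ']
  rw [sum_range_succ'] at hx
  have htail := sum_range_lt_of_le_mul_div (K := K) (μ := fun k => μ (k + 1))
    (by have := hμ 0; omega) (fun k => hμ (k + 1)) (fun k hk => hc _ (by omega))
    (fun k hk => hcx _ (by omega))
  have hx' : ((∑ k ∈ range K, (x (k + 1) - 1) : ℕ) : ℝ) ≤ μ 1 - 2 - (x 0 - 1 : ℕ) := by
    rw [le_sub_iff_add_le, le_sub_iff_add_le]; exact_mod_cast hx
  have hw : 3 / (2 * (μ 1 : ℝ)) * ((∑ k ∈ range K, (x (k + 1) - 1) : ℕ) : ℝ) ≤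
      3 / 2 - 3 / μ 1 - 3 / (2 * μ 1) * (x 0 - 1 : ℕ) := by
    calc _ ≤ 3 / (2 * (μ 1 : ℝ)) * (μ 1 - 2 - (x 0 - 1 : ℕ)) := by gcongr
      _ = _ := by field_simp
  have hw₃ : 9 / (2 * (μ 1 : ℝ)) - 3 / μ 1 = 3 / (2 * μ 1) := by field_simp; ring
  simp only [zero_add] at htail
  rcases le_or_gt (x 0) 1 with hx₀ | hx₀
  · have hc₀' : c 0 < 3 / μ 0 :=
      hc₀.trans_le (mul_le_of_le_one_left (by positivity) (by exact_mod_cast hx₀))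
    rcases hμ₀.eq_or_lt with h3 | h4
    · -- for `μ 0 = 3` the estimate is too weak, but then there are at most three blocks
      have hK2 : (K : ℝ) ≤ 2 := by exact_mod_cast (show K ≤ 2 by omega)
      have := sum_le_card_nsmul (range K) (fun k => c (k + 1)) 1 fun k hk =>
        hc _ (by simp at hk; omega)
      rw [← h3] at hc₀'
      norm_num at hc₀' this
      linarith
    · have hX : x 0 - 1 = 0 := by omega
      have hw' : 3 / (2 * (μ 1 : ℝ)) ≤ 3 / (4 * μ 0) :=
        div_le_div_of_nonneg_left (by norm_num) (by positivity) (by linarith)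
      have hm : 3 / (μ 0 : ℝ) + 3 / (4 * μ 0) ≤ 1 := by
        have : (4 : ℝ) ≤ μ 0 := by exact_mod_cast h4
        rw [div_add_div _ _ (by positivity) (by positivity), div_le_one (by positivity)]
        nlinarith
      rw [hX, Nat.cast_zero, mul_zero] at hw
      linarith
  · have hX : (1 : ℝ) ≤ (x 0 - 1 : ℕ) := by norm_cast; omega
    have := mul_le_mul_of_nonneg_left hX (by positivity : (0 : ℝ) ≤ 3 / (2 * μ 1))
    linarith [hc 0 (by omega)]

lemma sum_range_sum_biUnion_lt_three {d l : ℕ} {f : ℕ → ℕ →₀ ℝ} {μ : ℕ → ℕ}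
    {F : Fin d → Finset ℕ} (hl : 3 ≤ l) (hlμ : ∀ i, l ≤ μ i)
    (hμ : ∀ i, 2 * μ i ≤ μ (i + 1)) (hsupp : ∀ i, (f i).support ⊆ Ico (μ i) (μ (i + 1)))
    (hF : ∀ j j', j < j' → ∀ a ∈ F j, ∀ b ∈ F j', a < b) (hd : ∀ g ∈ univ.biUnion F, d ≤ g)
    (hle : ∀ i, ∑ k ∈ univ.biUnion F, f i k ≤ 1) (hpiece : ∀ i j, ∑ k ∈ F j, f i k < 3 / μ i) :
    ∑ i ∈ range l, ∑ k ∈ univ.biUnion F, f i k < 3 := by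
  set J : ℕ → Finset (Fin d) := fun i => piecesMeeting F (f i).support
  have hdisj := pairwise_disjoint_of_forall_lt hF
  have hcle : ∀ i, ∑ k ∈ univ.biUnion F, f i k ≤ #(J i) * (3 / μ i) := fun i =>
    sum_biUnion_le_card_mul hdisj (f i) fun j => (hpiece i j).le
  have hmono : Monotone μ := monotone_nat_of_le_succ fun i => by have := hμ i; omega
  have hstair : ∑ i ∈ range l, (#(J i) - 1) ≤ d - 1 :=
    sum_card_piecesMeeting_sub_one_le hF (fun i i' hii' a ha b hb =>
      (mem_Ico.1 (hsupp i ha)).2.trans_le ((hmono hii').trans (mem_Ico.1 (hsupp i' hb)).1)) _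
  have hzero : ∀ i, ¬(J i).Nonempty → ∑ k ∈ univ.biUnion F, f i k ≤ 0 := fun i hi =>
    (hcle i).trans_eq (by rw [not_nonempty_iff_eq_empty.1 hi, card_empty, Nat.cast_zero, zero_mul])
  by_cases hact : ∃ i, i < l ∧ (J i).Nonempty
  swap
  · exact (sum_nonpos fun i hi => hzero i fun h => hact ⟨i, mem_range.1 hi, h⟩).trans_lt
      (by norm_num)
  obtain ⟨i₀, ⟨hi₀l, j, hj⟩, hmin⟩ : ∃ i₀, (i₀ < l ∧ (J i₀).Nonempty) ∧
      ∀ i < i₀, ¬(i < l ∧ (J i).Nonempty) :=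
    ⟨Nat.find hact, Nat.find_spec hact, fun _ => Nat.find_min hact⟩
  obtain ⟨K, rfl⟩ : ∃ K, l = i₀ + K := ⟨l - i₀, by omega⟩
  have hbefore : ∑ i ∈ range i₀, ∑ k ∈ univ.biUnion F, f i k ≤ 0 :=
    sum_nonpos fun i hi => hzero i fun h => hmin i (mem_range.1 hi) ⟨(mem_range.1 hi).trans hi₀l, h⟩
  obtain ⟨g, hg, hg'⟩ := not_disjoint_iff.1 (mem_filter.1 hj).2
  have hdP : d < μ (i₀ + 1) :=
    (hd g (mem_biUnion.2 ⟨j, mem_univ _, hg⟩)).trans_lt (mem_Ico.1 (hsupp i₀ hg')).2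
  rw [sum_range_add] at hstair ⊢
  have hmain := sum_range_lt_three (K := K) (μ := fun k => μ (i₀ + k))
    (c := fun k => ∑ x ∈ univ.biUnion F, f (i₀ + k) x) (x := fun k => #(J (i₀ + k)))
    (hl.trans (hlμ i₀)) (by have := hlμ (i₀ + 0); omega) (fun k => hμ (i₀ + k)) (fun k _ => hle _)
    (sum_biUnion_lt_card_mul hdisj _ (hpiece i₀) ⟨j, hj⟩) (fun k _ => hcle _)
    (by have := hμ i₀; have := hlμ i₀; omega)
  linarith

theorem sum_ra_lt_of_mem_schreier {m n : ℕ} (hmn : m < n) {L : Set ℕ} (hL : IsAdmissible L)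
    {G : Finset ℕ} (hG : G ∈ Schreier m) : ∑ k ∈ G, ra n L k < 3 / (sInf L : ℕ) := by
  induction m generalizing n L G with
  | zero =>
    obtain ⟨n, rfl⟩ : ∃ n', n = n' + 1 := ⟨n - 1, by omega⟩
    have hl : (0 : ℝ) < sInf L := by exact_mod_cast hL.sInf_pos
    obtain ⟨a, ha⟩ := card_le_one_iff_subset_singleton.1 (show #G ≤ 1 from hG)
    calc ∑ k ∈ G, ra (n + 1) L k ≤ ∑ k ∈ {a}, ra (n + 1) L k :=
          sum_le_sum_of_subset_of_nonneg ha fun _ _ _ => ra_nonneg _ _ _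
      _ ≤ ((sInf L : ℕ) : ℝ)⁻¹ := by rw [sum_singleton]; exact ra_succ_apply_le hL a
      _ < 3 / (sInf L : ℕ) := by rw [inv_eq_one_div]; gcongr; norm_num
  | succ m ih =>
    obtain ⟨n, rfl⟩ : ∃ n', n = n' + 2 := ⟨n - 2, by omega⟩
    have hl : (0 : ℝ) < sInf L := by exact_mod_cast hL.sInf_pos
    by_cases hl3 : sInf L < 3
    · have : ((sInf L : ℕ) : ℝ) < 3 := by exact_mod_cast hl3
      exact (sum_ra_le_one hL G).trans_lt ((one_lt_div hl).2 this)
    obtain ⟨d, F, hF, hsucc, hd, rfl⟩ := exists_pieces_of_mem_schreier_succ hG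
    have hblocks := sum_range_sum_biUnion_lt_three (f := fun i => ra (n + 1) (raSet (n + 1) L i))
      (μ := fun i => sInf (raSet (n + 1) L i)) (not_lt.1 hl3) (sInf_le_sInf_raSet hL.1 _)
      (two_mul_sInf_raSet_le hL) (support_ra_raSet_subset_Ico hL.1) hsucc hd
      (fun i => sum_ra_le_one (hL.raSet _ i) _)
      (fun i j => ih (by omega) (hL.raSet _ i) (hF j))
    rw [sum_ra_succ, div_eq_inv_mul]
    exact mul_lt_mul_of_pos_left hblocks (inv_pos.2 hl)

/-- Let `n ∈ ℕ` and `L ⊆ ℕ` infinite (with `0 ∉ L`). For every `m < n`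
and every `G ∈ S_m`, the sum `∑_{k ∈ G} a_n^L(k)` is less than `3 / min L`. -/
theorem repeated_average_small_on_lower_schreier (n : ℕ) (L : Set ℕ)
    (hL : L.Infinite) (h0 : 0 ∉ L) :
    ∀ m < n, ∀ G ∈ Schreier m, (∑ k ∈ G, ra n L k) < 3 / (((sInf L : ℕ)) : ℝ) :=
  fun _ hm _ hG => sum_ra_lt_of_mem_schreier hm ⟨hL, h0⟩ hG
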